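/- arXiv:2205.04535 — 3 statements merged into one kernel-verified Lean document; each statement's English description precedes it below -/
import Mathlib

section
/- Let $v$ be a probability distribution on $n \ge 2$ points (a nonnegative vector summing to $1$). Then the entropy satisfies $S(v) \ge \log n - \|v - \frac{1}{n}\mathbf{1}\|_1 \log n - \frac{1}{e \log 2}$. -/
open Real Finset

private lemma ulog_le (u : ℝ) (hu : 0 ≤ u) : -(u * Real.log u) ≤ (Real.exp 1)⁻¹ := by
  rcases eq_or_lt_of_le hu with h | h
  · rw [← h]; simp; positivity
  · have h1 : Real.log ((Real.exp 1 * u)⁻¹) ≤ (Real.exp 1 * u)⁻¹ - 1 :=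
      Real.log_le_sub_one_of_pos (by positivity)
    rw [Real.log_inv, Real.log_mul (Real.exp_ne_zero 1) (ne_of_gt h), Real.log_exp] at h1
    have h2 : -Real.log u ≤ (Real.exp 1 * u)⁻¹ := by linarith
    have h3 : u * -Real.log u ≤ u * (Real.exp 1 * u)⁻¹ :=
      mul_le_mul_of_nonneg_left h2 hu
    have h4 : u * (Real.exp 1 * u)⁻¹ = (Real.exp 1)⁻¹ := by
      field_simp
    nlinarith [h3, h4]

private lemma coord (n : ℕ) (hn : 2 ≤ n) (x : ℝ) (hx0 : 0 ≤ x) (hx1 : x ≤ 1) :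
    Real.log n / n - -(x * Real.log x) ≤
      max ((1:ℝ)/n - x) 0 * Real.log n + max (x - 1/n) 0 + (n : ℝ)⁻¹ * (Real.exp 1)⁻¹ := by
  have hn0 : (0:ℝ) < n := by positivity
  have hn2 : (2:ℝ) ≤ n := by exact_mod_cast hn
  have hy0 : (0:ℝ) < 1/n := by positivity
  have hlogn : 0 < Real.log n := Real.log_pos (by linarith)
  have hfin : Real.log ↑n / ↑n = (1/n : ℝ) * Real.log n := by ring
  rcases le_total x (1/n) with hxy | hyx
  · -- below case
    have hd : max ((1:ℝ)/n - x) 0 = 1/n - x := max_eq_left (by linarith)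
    have hmax2 : max (x - 1/n) 0 = 0 := max_eq_right (by linarith)
    rw [hd, hmax2]
    have hd0 : 0 ≤ 1/(n:ℝ) - x := by linarith
    have hlog1n : Real.log (1/(n:ℝ)) = -Real.log n := by
      rw [one_div, Real.log_inv]
    have hsub : (1/n : ℝ) * Real.log n ≤ -(x * Real.log x) + -((1/(n:ℝ) - x) * Real.log (1/(n:ℝ) - x)) := by
      have e1 : x * Real.log n ≤ -(x * Real.log x) := by
        rcases eq_or_lt_of_le hx0 with h | h
        · rw [← h]; simp
        · have h2 : Real.log x ≤ Real.log (1/n) := Real.log_le_log h hxy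
          rw [hlog1n] at h2
          nlinarith
      have e2 : (1/(n:ℝ) - x) * Real.log n ≤ -((1/(n:ℝ) - x) * Real.log (1/(n:ℝ) - x)) := by
        rcases eq_or_lt_of_le hd0 with h | h
        · rw [← h]; simp
        · have h2 : Real.log (1/(n:ℝ) - x) ≤ Real.log (1/n) := Real.log_le_log h (by linarith)
          rw [hlog1n] at h2
          nlinarith
      nlinarith [e1, e2]
    have heta : -((1/(n:ℝ) - x) * Real.log (1/(n:ℝ) - x)) ≤ (1/(n:ℝ) - x) * Real.log n + (n : ℝ)⁻¹ * (Real.exp 1)⁻¹ := by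
      rcases eq_or_lt_of_le hd0 with h | h
      · rw [← h]; simp; positivity
      · have hk := ulog_le ((n:ℝ) * (1/(n:ℝ) - x)) (by positivity)
        rw [Real.log_mul (ne_of_gt hn0) (ne_of_gt h)] at hk
        have hinv : (0:ℝ) < (n:ℝ)⁻¹ := by positivity
        have hk2 : (n:ℝ)⁻¹ * -(↑n * (1/(n:ℝ) - x) * (Real.log ↑n + Real.log (1/(n:ℝ) - x))) ≤ (n:ℝ)⁻¹ * (Real.exp 1)⁻¹ :=
          mul_le_mul_of_nonneg_left hk hinv.le
        have hid : (n:ℝ)⁻¹ * -(↑n * (1/(n:ℝ) - x) * (Real.log ↑n + Real.log (1/(n:ℝ) - x)))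
            = -((1/(n:ℝ) - x) * Real.log (1/(n:ℝ) - x)) - (1/(n:ℝ) - x) * Real.log n := by
          field_simp; ring
        linarith [hk2, hid.le, hid.ge]
    rw [hfin]
    linarith [hsub, heta]
  · -- above case
    have hd : max ((1:ℝ)/n - x) 0 = 0 := max_eq_right (by linarith)
    have hmax2 : max (x - 1/n) 0 = x - 1/n := max_eq_left (by linarith)
    rw [hd, hmax2]
    have hx0' : 0 < x := lt_of_lt_of_le hy0 hyx
    have h1 : Real.log x ≤ -Real.log n + (x - 1/n) * n := by
      have hh := Real.log_le_sub_one_of_pos (show (0:ℝ) < x / (1/n) by positivity)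
      rw [Real.log_div (ne_of_gt hx0') (ne_of_gt hy0)] at hh
      have hxx : x / (1/n) = x * n := by field_simp
      have hlog1n : Real.log (1/n) = -Real.log n := by rw [one_div, Real.log_inv]
      rw [hxx, hlog1n] at hh
      have hone : (1/(n:ℝ))*n = 1 := by field_simp
      nlinarith [hh, hone]
    have h2 : Real.log x ≤ 0 := Real.log_nonpos hx0 hx1
    have h5 : (1/n:ℝ) * Real.log x ≤ (1/n) * (-Real.log n + (x-1/n)*n) :=
      mul_le_mul_of_nonneg_left h1 (by positivity)
    have h6 : (x - 1/n) * Real.log x ≤ 0 :=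
      mul_nonpos_of_nonneg_of_nonpos (by linarith) h2
    have h7 : (1/n:ℝ) * ((x-1/n)*n) = x - 1/n := by field_simp
    have h3 : x * Real.log x = (1/n) * Real.log x + (x - 1/n) * Real.log x := by ring
    have h8 : (0:ℝ) ≤ (n : ℝ)⁻¹ * (Real.exp 1)⁻¹ := by positivity
    rw [hfin]
    nlinarith [h5, h6, h7, h8, h3]

/-- For a probability distribution `v` on `n ≥ 2` points,
`S(v) ≥ log n - ‖v - (1/n)𝟙‖₁ log n - 1/(e log 2)`. -/
theorem entropy_lower_bound {n : ℕ} (hn : 2 ≤ n) (v : Fin n → ℝ)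
    (hnonneg : ∀ i, 0 ≤ v i) (hsum : ∑ i, v i = 1) :
    Real.log n - (∑ i, |v i - 1 / n|) * Real.log n - 1 / (Real.exp 1 * Real.log 2)
      ≤ ∑ i, v i * Real.log (1 / v i) := by
  have hn0 : (0:ℝ) < n := by positivity
  have hn0' : (n:ℝ) ≠ 0 := ne_of_gt hn0
  have hn2 : (2:ℝ) ≤ n := by exact_mod_cast hn
  have hlog2pos : 0 < Real.log 2 := Real.log_pos (by norm_num)
  have hL2 : Real.log 2 ≤ Real.log n := Real.log_le_log (by norm_num) hn2
  have hepos : (0:ℝ) < Real.exp 1 := Real.exp_pos 1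
  have hvle1 : ∀ i, v i ≤ 1 := by
    intro i
    calc v i ≤ ∑ j, v j := Finset.single_le_sum (fun j _ => hnonneg j) (Finset.mem_univ i)
    _ = 1 := hsum
  have hrw : ∀ i, v i * Real.log (1 / v i) = -(v i * Real.log (v i)) := by
    intro i; rw [one_div, Real.log_inv]; ring
  set S := ∑ i, v i * Real.log (1 / v i) with hS
  set P := ∑ i, max (v i - 1/(n:ℝ)) 0 with hP
  set M := ∑ i, max ((1:ℝ)/(n:ℝ) - v i) 0 with hM
  have hPM : P = M := by
    have h1 : ∑ i, (max (v i - 1/(n:ℝ)) 0 - max ((1:ℝ)/(n:ℝ) - v i) 0) = ∑ i, (v i - 1/(n:ℝ)) := by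
      apply Finset.sum_congr rfl
      intro i _
      rcases le_total (v i) (1/(n:ℝ)) with h | h
      · rw [max_eq_right (by linarith), max_eq_left (by linarith)]; ring
      · rw [max_eq_left (by linarith), max_eq_right (by linarith)]; ring
    rw [Finset.sum_sub_distrib, Finset.sum_sub_distrib, hsum] at h1
    simp only [Finset.sum_const, Finset.card_univ, Fintype.card_fin, nsmul_eq_mul] at h1
    rw [mul_one_div, div_self hn0'] at h1
    have : P - M = 0 := by rw [hP, hM]; linarith
    linarith
  have habs : (∑ i, |v i - 1 / (n:ℝ)|) = P + M := by
    rw [hP, hM, ← Finset.sum_add_distrib]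
    apply Finset.sum_congr rfl
    intro i _
    rcases le_total (v i) (1/(n:ℝ)) with h | h
    · rw [abs_of_nonpos (by linarith), max_eq_right (by linarith), max_eq_left (by linarith)]; ring
    · rw [abs_of_nonneg (by linarith), max_eq_left (by linarith), max_eq_right (by linarith)]; ring
  have hPnonneg : 0 ≤ P := Finset.sum_nonneg fun i _ => le_max_right _ _
  -- sum the coordinate bounds
  have hmain : Real.log n - S ≤ M * Real.log n + P + (Real.exp 1)⁻¹ := by
    have hsumineq : ∑ i, (Real.log (n:ℝ) / n - -(v i * Real.log (v i)))
        ≤ ∑ i, (max ((1:ℝ)/n - v i) 0 * Real.log n + max (v i - 1/n) 0 + (n : ℝ)⁻¹ * (Real.exp 1)⁻¹) :=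
      Finset.sum_le_sum (fun i _ => coord n hn (v i) (hnonneg i) (hvle1 i))
    rw [Finset.sum_sub_distrib] at hsumineq
    simp only [Finset.sum_add_distrib, ← Finset.sum_mul] at hsumineq
    simp only [Finset.sum_const, Finset.card_univ, Fintype.card_fin, nsmul_eq_mul] at hsumineq
    have e2 : (n:ℝ) * (n:ℝ)⁻¹ * (Real.exp 1)⁻¹ = (Real.exp 1)⁻¹ := by field_simp
    have e2' : (n:ℝ) * ((n:ℝ)⁻¹ * (Real.exp 1)⁻¹) = (Real.exp 1)⁻¹ := by field_simp
    have e1 : (n:ℝ) * (Real.log ↑n / ↑n) = Real.log n := by field_simp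
    have e3 : ∑ i, -(v i * Real.log (v i)) = S := by
      rw [hS]; apply Finset.sum_congr rfl; intro i _; rw [hrw i]
    rw [hP, hM]
    linarith [hsumineq, e1.le, e1.ge, e2.le, e2.ge, e2'.le, e2'.ge, e3.le, e3.ge]
  -- final arithmetic
  rw [habs, hPM]
  have hkey : P + (Real.exp 1)⁻¹ ≤ P * Real.log n + 1 / (Real.exp 1 * Real.log 2) := by
    rcases eq_or_lt_of_le hn with hn2' | hn3
    · -- n = 2
      subst hn2'
      have hc : ((2:ℕ):ℝ) = 2 := by norm_num
      have hPhalf : P ≤ 1/2 := by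
        rw [hP, Fin.sum_univ_two, hc]
        have h01 : v 0 + v 1 = 1 := by rw [← hsum, Fin.sum_univ_two]
        rcases le_total (v 0) (1/2) with h | h
        · rw [max_eq_right (by linarith)]
          rcases le_total (v 1) (1/2) with h' | h'
          · rw [max_eq_right (by linarith)]; norm_num
          · rw [max_eq_left (by linarith)]; linarith [hnonneg 0]
        · have h' : v 1 ≤ 1/2 := by linarith [hnonneg 0]
          rw [max_eq_right (show v 1 - 1/2 ≤ 0 by linarith)]
          rcases le_total (v 0) (1/2) with h'' | h''
          · rw [max_eq_right (by linarith)]; norm_num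
          · rw [max_eq_left (by linarith)]
            have := hvle1 0
            linarith
      have hlogn2 : Real.log ((2:ℕ):ℝ) = Real.log 2 := by rw [hc]
      have hlt : Real.exp 1 * Real.log 2 < 2 := by
        nlinarith [Real.exp_one_lt_d9, Real.log_two_lt_d9, Real.log_two_gt_d9, hepos]
      have hpos : 0 < Real.exp 1 * Real.log 2 := by positivity
      have hc2 : (1:ℝ)/2 ≤ 1 / (Real.exp 1 * Real.log 2) := by
        rw [div_le_div_iff₀ (by norm_num) hpos]; linarith
      have hlog2lt1 : Real.log 2 < 1 := by
        nlinarith [Real.log_two_lt_d9]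
      have heq : (1 / (Real.exp 1 * Real.log 2)) * Real.log 2 = (Real.exp 1)⁻¹ := by
        field_simp
      have key : (0:ℝ) ≤ (1 / (Real.exp 1 * Real.log 2) - P) * (1 - Real.log 2) :=
        mul_nonneg (by linarith) (by linarith)
      rw [hlogn2]
      nlinarith [key, heq.le, heq.ge]
    · -- n ≥ 3
      have h3 : (3:ℝ) ≤ n := by exact_mod_cast hn3
      have hL1 : 1 < Real.log n := by
        rw [Real.lt_log_iff_exp_lt hn0]
        calc Real.exp 1 < 2.7182818286 := Real.exp_one_lt_d9
          _ < 3 := by norm_num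
          _ ≤ n := h3
      have hlog2le1 : Real.log 2 ≤ 1 := by linarith [Real.log_two_lt_d9]
      have hce : (Real.exp 1)⁻¹ ≤ 1 / (Real.exp 1 * Real.log 2) := by
        rw [inv_eq_one_div, div_le_div_iff₀ hepos (by positivity)]
        have h := mul_le_mul_of_nonneg_left hlog2le1 hepos.le
        linarith
      have hPl := mul_le_mul_of_nonneg_left hL1.le hPnonneg
      linarith [hce, hPl]
  rw [hPM] at hkey hmain
  linarith [hmain, hkey]
end

section
/- Let $G$ be a connected graph on $n$ vertices, $L$ its Laplacian with second-smallest eigenvalue $\lambda_2 > 0$, $\gamma = |E|/\lambda_2$, and let $v(t)$ be the averaging process with initial vector $v(0)$ satisfying $\sum_i v_i(0) = 0$. Then $\mathbb{E}[\|v(t)\|_2^2] \le (1 - \frac{1}{2\gamma})^t \|v(0)\|_2^2$. -/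
open Finset

set_option linter.unusedSectionVars false
set_option maxHeartbeats 1000000

variable {V : Type*} [Fintype V] [DecidableEq V]

/-- Replace coordinates `i` and `j` of `v` by their average `(v i + v j)/2`. -/
noncomputable def avgStep (v : V → ℝ) (i j : V) : V → ℝ :=
  Function.update (Function.update v i ((v i + v j) / 2)) j ((v i + v j) / 2)

theorem avgStep_comm (v : V → ℝ) (i j : V) : avgStep v i j = avgStep v j i := by
  by_cases h : i = j
  · subst h; rfl
  · unfold avgStep
    rw [add_comm (v j) (v i)]
    exact Function.update_comm h _ _ _

/-- One averaging step along an unordered edge. -/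
noncomputable def avgSym2 (v : V → ℝ) : Sym2 V → (V → ℝ) :=
  Sym2.lift ⟨avgStep v, avgStep_comm v⟩

/-- The averaging process run along a given (finite) list of edges. -/
noncomputable def procL (v : V → ℝ) : List (Sym2 V) → (V → ℝ)
  | [] => v
  | e :: rest => procL (avgSym2 v e) rest

lemma avgStep_self (v : V → ℝ) (i : V) : avgStep v i i = v := by
  unfold avgStep
  rw [Function.update_idem]
  have : (v i + v i) / 2 = v i := by ring
  rw [this, Function.update_eq_self]

lemma sum_avgStep (v : V → ℝ) (i j : V) : ∑ k, avgStep v i j k = ∑ k, v k := by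
  by_cases hij : i = j
  · subst hij; rw [avgStep_self]
  · have h1 : ∀ k, avgStep v i j k = v k +
        ((if k = i then (v i + v j) / 2 - v i else 0) +
         (if k = j then (v i + v j) / 2 - v j else 0)) := by
      intro k
      unfold avgStep
      rcases eq_or_ne k i with rfl | hki <;> rcases eq_or_ne k j with rfl | hkj <;>
        simp_all [Function.update_apply] <;> ring
    simp_rw [h1, Finset.sum_add_distrib, Finset.sum_ite_eq' univ, mem_univ, if_true]
    ring

lemma sum_sq_avgStep (v : V → ℝ) (i j : V) :
    ∑ k, (avgStep v i j k) ^ 2 = ∑ k, (v k) ^ 2 - (v i - v j) ^ 2 / 2 := by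
  by_cases hij : i = j
  · subst hij; rw [avgStep_self]; simp
  · have h1 : ∀ k, (avgStep v i j k) ^ 2 = (v k) ^ 2 +
        ((if k = i then ((v i + v j) / 2) ^ 2 - (v i) ^ 2 else 0) +
         (if k = j then ((v i + v j) / 2) ^ 2 - (v j) ^ 2 else 0)) := by
      intro k
      unfold avgStep
      rcases eq_or_ne k i with rfl | hki <;> rcases eq_or_ne k j with rfl | hkj <;>
        simp_all [Function.update_apply] <;> ring
    simp_rw [h1, Finset.sum_add_distrib, Finset.sum_ite_eq' univ, mem_univ, if_true]
    ring

lemma sum_avgSym2 (v : V → ℝ) (e : Sym2 V) : ∑ k, avgSym2 v e k = ∑ k, v k := by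
  induction e using Sym2.ind with
  | _ i j => exact sum_avgStep v i j

private lemma diff_sq_symm (v : V → ℝ) : ∀ a b : V, (v a - v b) ^ 2 = (v b - v a) ^ 2 :=
  fun a b => by ring

lemma sum_sq_avgSym2 (v : V → ℝ) (e : Sym2 V) :
    ∑ k, (avgSym2 v e k) ^ 2
      = ∑ k, (v k) ^ 2 - (Sym2.lift ⟨fun a b => (v a - v b) ^ 2, diff_sq_symm v⟩ e) / 2 := by
  induction e using Sym2.ind with
  | _ i j => exact sum_sq_avgStep v i j

lemma edge_sum_lift (G : SimpleGraph V) [DecidableRel G.Adj]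
    (f : V → V → ℝ) (hf : ∀ a b, f a b = f b a) :
    ∑ e ∈ G.edgeFinset, Sym2.lift ⟨f, hf⟩ e
      = (∑ i, ∑ j, if G.Adj i j then f i j else 0) / 2 := by
  have h1 : ∑ d : G.Dart, Sym2.lift ⟨f, hf⟩ d.edge
      = ∑ e ∈ G.edgeFinset, 2 * Sym2.lift ⟨f, hf⟩ e := by
    rw [← Finset.sum_fiberwise_of_maps_to (t := G.edgeFinset) (g := SimpleGraph.Dart.edge)
      (fun d _ => by rw [SimpleGraph.mem_edgeFinset]; exact d.edge_mem)]
    refine Finset.sum_congr rfl fun e he => ?_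
    have hcard : #{d : G.Dart | d.edge = e} = 2 :=
      G.dart_edge_fiber_card e (SimpleGraph.mem_edgeFinset.mp he)
    rw [Finset.sum_congr rfl (fun d hd => by
      rw [(Finset.mem_filter.mp hd).2]), Finset.sum_const, hcard]
    simp [mul_comm]
  have h2 : ∑ d : G.Dart, Sym2.lift ⟨f, hf⟩ d.edge
      = ∑ i, ∑ j, if G.Adj i j then f i j else 0 := by
    rw [← Finset.sum_product', ← Finset.sum_filter]
    refine Finset.sum_bij' (fun d _ ↦ (d.fst, d.snd)) (fun xy h ↦ ⟨xy, (mem_filter.1 h).2⟩)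
      ?_ ?_ ?_ ?_ ?_ <;> simp [SimpleGraph.Dart.edge]
  have h3 : 2 * ∑ e ∈ G.edgeFinset, Sym2.lift ⟨f, hf⟩ e
      = ∑ i, ∑ j, if G.Adj i j then f i j else 0 := by
    rw [Finset.mul_sum, ← h1, h2]
  linarith

open Matrix in
lemma quad_form (G : SimpleGraph V) [DecidableRel G.Adj] (v : V → ℝ) :
    v ⬝ᵥ (G.lapMatrix ℝ).mulVec v
      = (∑ i, ∑ j, if G.Adj i j then (v i - v j) ^ 2 else 0) / 2 := by
  rw [← Matrix.toLinearMap₂'_apply', SimpleGraph.lapMatrix_toLinearMap₂']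

open Matrix in
/-- One-step identity: summing over all edges. -/
lemma step_identity (G : SimpleGraph V) [DecidableRel G.Adj] (v : V → ℝ) :
    ∑ e ∈ G.edgeFinset, ∑ i, (avgSym2 v e i) ^ 2
      = (G.edgeFinset.card : ℝ) * ∑ i, (v i) ^ 2
        - (v ⬝ᵥ (G.lapMatrix ℝ).mulVec v) / 2 := by
  rw [Finset.sum_congr rfl (fun e _ => sum_sq_avgSym2 v e), Finset.sum_sub_distrib,
    Finset.sum_const, ← Finset.sum_div, edge_sum_lift G _ (diff_sq_symm v), quad_form]
  simp [mul_comm]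

lemma procL_zero : ∀ l : List (Sym2 V), procL (0 : V → ℝ) l = 0 := by
  intro l
  induction l with
  | nil => rfl
  | cons e rest ih =>
      have h0 : avgSym2 (0 : V → ℝ) e = 0 := by
        induction e using Sym2.ind with
        | _ i j => funext k; simp [avgSym2, avgStep, Function.update_apply]
      simp only [procL, h0, ih]

open Matrix in
lemma rayleigh (G : SimpleGraph V) [DecidableRel G.Adj] (lam2 : ℝ)
    (hlam2 : lam2 ∈ lowerBounds {r : ℝ | ∃ w : V → ℝ, w ≠ 0 ∧ (∑ i, w i) = 0 ∧
      r = (w ⬝ᵥ (G.lapMatrix ℝ).mulVec w) / (∑ i, (w i) ^ 2)})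
    (v : V → ℝ) (hmean : ∑ i, v i = 0) :
    lam2 * ∑ i, (v i) ^ 2 ≤ v ⬝ᵥ (G.lapMatrix ℝ).mulVec v := by
  by_cases hv : v = 0
  · simp [hv]
  · have hs : 0 < ∑ i, (v i) ^ 2 := by
      obtain ⟨i, hi⟩ := Function.ne_iff.mp hv
      exact Finset.sum_pos' (fun k _ => sq_nonneg _)
        ⟨i, Finset.mem_univ i, (sq_nonneg _).lt_of_ne ((pow_ne_zero 2 hi).symm)⟩
    have hle : lam2 ≤ (v ⬝ᵥ (G.lapMatrix ℝ).mulVec v) / (∑ i, (v i) ^ 2) :=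
      hlam2 ⟨v, hv, hmean, rfl⟩
    calc lam2 * ∑ i, (v i) ^ 2
        ≤ ((v ⬝ᵥ (G.lapMatrix ℝ).mulVec v) / (∑ i, (v i) ^ 2)) * ∑ i, (v i) ^ 2 :=
          mul_le_mul_of_nonneg_right hle hs.le
      _ = v ⬝ᵥ (G.lapMatrix ℝ).mulVec v := by field_simp

open Matrix in
/-- for a connected graph with spectral gap `λ₂ > 0` (characterized as the
least Rayleigh quotient of the Laplacian over nonzero mean-zero vectors) and
`γ = |E|/λ₂`, the averaging process started from a mean-zero vector satisfies
`E‖v(t)‖₂² ≤ (1 - 1/(2γ))ᵗ ‖v(0)‖₂²`.  The expectation is the uniform average over all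
length-`t` edge sequences of `G`. -/
theorem expected_l2_sq_decay (G : SimpleGraph V) [DecidableRel G.Adj] (hG : G.Connected)
    (lam2 : ℝ) (hpos : 0 < lam2)
    (hlam2 : IsLeast {r : ℝ | ∃ w : V → ℝ, w ≠ 0 ∧ (∑ i, w i) = 0 ∧
      r = (w ⬝ᵥ (G.lapMatrix ℝ).mulVec w) / (∑ i, (w i) ^ 2)} lam2)
    (v : V → ℝ) (hmean : ∑ i, v i = 0) (t : ℕ) :
    (∑ es : Fin t → G.edgeFinset, ∑ i,
          (procL v (List.ofFn fun s => ((es s : Sym2 V))) i) ^ 2)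
        / ((G.edgeFinset.card : ℝ) ^ t)
      ≤ (1 - 1 / (2 * ((G.edgeFinset.card : ℝ) / lam2))) ^ t * ∑ i, (v i) ^ 2 := by
  by_cases hm0 : G.edgeFinset.card = 0
  · -- degenerate: connected with no edges means at most one vertex, so v = 0
    have hsub : ∀ a b : V, a = b := by
      intro a b; by_contra hne
      obtain ⟨w⟩ := hG.preconnected a b
      cases w with
      | nil => exact hne rfl
      | cons h p =>
          have : s(a, _) ∈ G.edgeFinset := SimpleGraph.mem_edgeFinset.mpr h
          rw [Finset.card_eq_zero.mp hm0] at this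
          exact absurd this (Finset.notMem_empty _)
    haveI : Subsingleton V := ⟨hsub⟩
    have hv : v = 0 := by
      funext i
      have := Fintype.sum_subsingleton v i
      rw [hmean] at this
      exact this.symm
    subst hv
    simp [procL_zero]
  · have hmpos : (0:ℝ) < (G.edgeFinset.card : ℝ) :=
      Nat.cast_pos.mpr (Nat.pos_of_ne_zero hm0)
    set m : ℝ := (G.edgeFinset.card : ℝ) with hm
    set c : ℝ := 1 - lam2 / (2 * m) with hc
    clear_value m c
    -- nonnegativity of c
    have hcnn : 0 ≤ c := by
      obtain ⟨w, hw0, hwm, hwr⟩ := hlam2.1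
      have hs : 0 < ∑ i, (w i) ^ 2 := by
        obtain ⟨i, hi⟩ := Function.ne_iff.mp hw0
        exact Finset.sum_pos' (fun k _ => sq_nonneg _)
          ⟨i, Finset.mem_univ i, (sq_nonneg _).lt_of_ne ((pow_ne_zero 2 hi).symm)⟩
      have hQ : (w ⬝ᵥ (G.lapMatrix ℝ).mulVec w) = lam2 * ∑ i, (w i) ^ 2 := by
        field_simp at hwr; linarith
      have h0 : (0:ℝ) ≤ ∑ e ∈ G.edgeFinset, ∑ i, (avgSym2 w e i) ^ 2 :=
        Finset.sum_nonneg fun e _ => Finset.sum_nonneg fun i _ => sq_nonneg _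
      rw [step_identity, hQ, ← hm] at h0
      have h1 : 0 ≤ m - lam2 / 2 := by nlinarith
      rw [hc, sub_nonneg, div_le_one (by linarith : (0:ℝ) < 2 * m)]
      linarith
    have hkey : ∀ w : V → ℝ, (∑ i, w i) = 0 →
        ∑ e ∈ G.edgeFinset, ∑ i, (avgSym2 w e i) ^ 2 ≤ m * c * ∑ i, (w i) ^ 2 := by
      intro w hw
      rw [step_identity, ← hm]
      have hray := rayleigh G lam2 hlam2.2 w hw
      have h2 : m * c * ∑ i, (w i) ^ 2
          = m * ∑ i, (w i) ^ 2 - (lam2 * ∑ i, (w i) ^ 2) / 2 := by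
        rw [hc]; field_simp
      rw [h2]; linarith
    have main : ∀ t : ℕ, ∀ w : V → ℝ, (∑ i, w i) = 0 →
        (∑ es : Fin t → G.edgeFinset, ∑ i,
          (procL w (List.ofFn fun s => ((es s : Sym2 V))) i) ^ 2)
          ≤ (m * c) ^ t * ∑ i, (w i) ^ 2 := by
      intro t
      induction t with
      | zero => intro w hw; simp [procL]
      | succ t ih =>
          intro w hw
          have hequiv : (∑ es : Fin (t+1) → G.edgeFinset, ∑ i,
              (procL w (List.ofFn fun s => ((es s : Sym2 V))) i) ^ 2)
            = ∑ e : G.edgeFinset, ∑ es : Fin t → G.edgeFinset, ∑ i,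
              (procL (avgSym2 w (e : Sym2 V)) (List.ofFn fun s => ((es s : Sym2 V))) i) ^ 2 := by
            rw [← Equiv.sum_comp (Fin.consEquiv fun _ => G.edgeFinset)
              (fun es : Fin (t+1) → G.edgeFinset => ∑ i,
                (procL w (List.ofFn fun s => ((es s : Sym2 V))) i) ^ 2),
              Fintype.sum_prod_type]
            refine Finset.sum_congr rfl fun e _ => Finset.sum_congr rfl fun es _ => ?_
            simp [Fin.consEquiv, List.ofFn_succ, procL]
          rw [hequiv]
          calc ∑ e : G.edgeFinset, ∑ es : Fin t → G.edgeFinset, ∑ i,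
              (procL (avgSym2 w (e : Sym2 V)) (List.ofFn fun s => ((es s : Sym2 V))) i) ^ 2
              ≤ ∑ e : G.edgeFinset, (m * c) ^ t * ∑ i, (avgSym2 w (e : Sym2 V) i) ^ 2 :=
                Finset.sum_le_sum fun e _ => ih _ (by rw [sum_avgSym2 w _, hw])
            _ = (m * c) ^ t * ∑ e ∈ G.edgeFinset, ∑ i, (avgSym2 w e i) ^ 2 := by
                rw [← Finset.mul_sum]
                congr 1
                exact Finset.sum_coe_sort G.edgeFinset
                  (fun e => ∑ i, (avgSym2 w e i) ^ 2)
            _ ≤ (m * c) ^ t * (m * c * ∑ i, (w i) ^ 2) := by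
                exact mul_le_mul_of_nonneg_left (hkey w hw)
                  (pow_nonneg (mul_nonneg hmpos.le hcnn) t)
            _ = (m * c) ^ (t + 1) * ∑ i, (w i) ^ 2 := by ring
    have hbase : 1 - 1 / (2 * (m / lam2)) = c := by
      rw [hc]
      have h1 : lam2 ≠ 0 := hpos.ne'
      have h2 : m ≠ 0 := hmpos.ne'
      congr 1
      field_simp
    rw [hbase, div_le_iff₀ (pow_pos hmpos t)]
    calc (∑ es : Fin t → G.edgeFinset, ∑ i,
          (procL v (List.ofFn fun s => ((es s : Sym2 V))) i) ^ 2)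
        ≤ (m * c) ^ t * ∑ i, (v i) ^ 2 := main t v hmean
      _ = c ^ t * (∑ i, (v i) ^ 2) * m ^ t := by rw [mul_pow]; ring
end

section
/- Let $u_2$ be a unit eigenvector of the Laplacian $L$ of a connected graph $G$ corresponding to $\lambda_2$, and let $v(t)$ be the averaging process started from $v(0) = u_2$. Then $\mathbb{E}[\|v(t)\|_2^2] \ge (1 - \frac{\lambda_2}{2|E|})^{2t}$. -/
open Finset

set_option linter.unusedSectionVars false

variable {V : Type*} [Fintype V] [DecidableEq V]

lemma avgSym2_mk (v : V → ℝ) (a b : V) : avgSym2 v s(a, b) = avgStep v a b := rfl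

lemma avgStep_left (v : V → ℝ) (a b : V) : avgStep v a b a = (v a + v b) / 2 := by
  unfold avgStep
  rw [Function.update_apply]
  split_ifs with h
  · subst h; rfl
  · rw [Function.update_self]

lemma avgSym2_of_not_mem (v : V → ℝ) {e : Sym2 V} {i : V} (h : i ∉ e) :
    avgSym2 v e i = v i := by
  induction e using Sym2.ind with
  | _ a b =>
    rw [Sym2.mem_iff] at h
    push_neg at h
    rw [avgSym2_mk]
    unfold avgStep
    rw [Function.update_of_ne h.2, Function.update_of_ne h.1]

lemma procL_concat (v : V → ℝ) (l : List (Sym2 V)) (e : Sym2 V) :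
    procL v (l.concat e) = avgSym2 (procL v l) e := by
  induction l generalizing v with
  | nil => rfl
  | cons a l ih => simpa [procL] using ih (avgSym2 v a)

open Matrix in
/-- One-step expectation (times `|E|`): summing the averaging step over all edges. -/
lemma sum_avgSym2_s13 (G : SimpleGraph V) [DecidableRel G.Adj] (v : V → ℝ) (i : V) :
    ∑ e ∈ G.edgeFinset, avgSym2 v e i
      = (G.edgeFinset.card : ℝ) * v i - (G.lapMatrix ℝ).mulVec v i / 2 := by
  have hsplit : ∀ e ∈ G.edgeFinset, avgSym2 v e i = v i + (avgSym2 v e i - v i) := by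
    intro e _; ring
  rw [Finset.sum_congr rfl hsplit, Finset.sum_add_distrib, Finset.sum_const, nsmul_eq_mul]
  have hsub : G.incidenceFinset i ⊆ G.edgeFinset := by
    intro e he
    rw [SimpleGraph.mem_incidenceFinset] at he
    exact SimpleGraph.mem_edgeFinset.2 he.1
  have h1 : ∑ e ∈ G.edgeFinset, (avgSym2 v e i - v i)
      = ∑ e ∈ G.incidenceFinset i, (avgSym2 v e i - v i) := by
    refine (Finset.sum_subset hsub ?_).symm
    intro e he hni
    have hi : i ∉ e := by
      intro hi
      refine hni ?_
      rw [SimpleGraph.mem_incidenceFinset]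
      exact ⟨SimpleGraph.mem_edgeFinset.1 he, hi⟩
    rw [avgSym2_of_not_mem v hi, sub_self]
  have h2 : ∑ e ∈ G.incidenceFinset i, (avgSym2 v e i - v i)
      = ∑ j ∈ G.neighborFinset i, (avgSym2 v s(i, j) i - v i) := by
    refine (Finset.sum_bij (fun j _ => s(i, j)) ?_ ?_ ?_ ?_).symm
    · intro j hj
      rw [SimpleGraph.mem_neighborFinset] at hj
      rw [SimpleGraph.mem_incidenceFinset]
      exact ⟨(SimpleGraph.mem_edgeSet G).2 hj, Sym2.mem_mk_left i j⟩
    · intro a ha b hb hab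
      rw [Sym2.eq_iff] at hab
      rcases hab with ⟨-, h⟩ | ⟨h1', h2'⟩
      · exact h
      · exact h2'.trans h1'
    · intro e he
      rw [SimpleGraph.mem_incidenceFinset] at he
      obtain ⟨j, rfl⟩ := Sym2.mem_iff_exists.1 he.2
      refine ⟨j, ?_, rfl⟩
      rw [SimpleGraph.mem_neighborFinset]
      exact (SimpleGraph.mem_edgeSet G).1 he.1
    · intro j hj; rfl
  have h3 : ∑ j ∈ G.neighborFinset i, (avgSym2 v s(i, j) i - v i)
      = ((∑ j ∈ G.neighborFinset i, v j) - (G.degree i : ℝ) * v i) / 2 := by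
    have hval : ∀ j ∈ G.neighborFinset i,
        avgSym2 v s(i, j) i - v i = v j / 2 - v i / 2 := by
      intro j _
      rw [avgSym2_mk, avgStep_left]
      ring
    rw [Finset.sum_congr rfl hval, Finset.sum_sub_distrib, Finset.sum_const, nsmul_eq_mul,
        SimpleGraph.card_neighborFinset_eq_degree, ← Finset.sum_div]
    ring
  rw [h1, h2, h3, SimpleGraph.lapMatrix_mulVec_apply]
  ring

open Matrix in
lemma sum_procL (G : SimpleGraph V) [DecidableRel G.Adj] (lam2 : ℝ) (u2 : V → ℝ)
    (heig : (G.lapMatrix ℝ).mulVec u2 = lam2 • u2) :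
    ∀ t : ℕ, ∀ i : V,
      (∑ es : Fin t → G.edgeFinset,
        procL u2 (List.ofFn fun s => ((es s : Sym2 V))) i)
      = ((G.edgeFinset.card : ℝ) - lam2 / 2) ^ t * u2 i := by
  intro t
  induction t with
  | zero =>
    intro i
    simp [List.ofFn_zero, procL]
  | succ t ih =>
    intro i
    set K : ℝ := (G.edgeFinset.card : ℝ) - lam2 / 2 with hK
    rw [← Equiv.sum_comp (Fin.snocEquiv (fun _ => G.edgeFinset))
      (fun es => procL u2 (List.ofFn fun s => ((es s : Sym2 V))) i)]
    rw [Fintype.sum_prod_type]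
    have hterm : ∀ (e : G.edgeFinset) (es' : Fin t → G.edgeFinset),
        procL u2 (List.ofFn fun s =>
          (((Fin.snocEquiv (fun _ => G.edgeFinset)) (e, es') s : Sym2 V))) i
        = avgSym2 (procL u2 (List.ofFn fun s => ((es' s : Sym2 V)))) (e : Sym2 V) i := by
      intro e es'
      have hlist : (List.ofFn fun s =>
          (((Fin.snocEquiv (fun _ => G.edgeFinset)) (e, es') s : Sym2 V)))
          = (List.ofFn fun s => ((es' s : Sym2 V))).concat (e : Sym2 V) := by
        rw [List.ofFn_succ']
        congr 1
        · exact congrArg List.ofFn (funext fun s => by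
            simp [Fin.snocEquiv])
        · simp [Fin.snocEquiv]
      rw [hlist, procL_concat]
    rw [Finset.sum_congr rfl fun e _ => Finset.sum_congr rfl fun es' _ => hterm e es']
    rw [Finset.sum_comm]
    have hstep : ∀ es' : Fin t → G.edgeFinset,
        (∑ e : G.edgeFinset,
          avgSym2 (procL u2 (List.ofFn fun s => ((es' s : Sym2 V)))) (e : Sym2 V) i)
        = (G.edgeFinset.card : ℝ) * (procL u2 (List.ofFn fun s => ((es' s : Sym2 V)))) i
          - (G.lapMatrix ℝ).mulVec (procL u2 (List.ofFn fun s => ((es' s : Sym2 V)))) i / 2 := by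
      intro es'
      rw [← sum_avgSym2_s13 G _ i]
      exact Finset.sum_coe_sort G.edgeFinset
        (fun e => avgSym2 (procL u2 (List.ofFn fun s => ((es' s : Sym2 V)))) e i)
    rw [Finset.sum_congr rfl fun es' _ => hstep es']
    rw [Finset.sum_sub_distrib]
    have hA : (∑ es' : Fin t → G.edgeFinset,
        (G.edgeFinset.card : ℝ) * (procL u2 (List.ofFn fun s => ((es' s : Sym2 V)))) i)
        = (G.edgeFinset.card : ℝ) * (K ^ t * u2 i) := by
      rw [← Finset.mul_sum, ih i]
    have hB : (∑ es' : Fin t → G.edgeFinset,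
        (G.lapMatrix ℝ).mulVec (procL u2 (List.ofFn fun s => ((es' s : Sym2 V)))) i / 2)
        = K ^ t * (lam2 * u2 i) / 2 := by
      rw [← Finset.sum_div]
      congr 1
      have hswap : (∑ es' : Fin t → G.edgeFinset,
          (G.lapMatrix ℝ).mulVec (procL u2 (List.ofFn fun s => ((es' s : Sym2 V)))) i)
          = (G.lapMatrix ℝ).mulVec (fun j => ∑ es' : Fin t → G.edgeFinset,
              procL u2 (List.ofFn fun s => ((es' s : Sym2 V))) j) i := by
        simp only [Matrix.mulVec, dotProduct]
        rw [Finset.sum_comm]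
        exact Finset.sum_congr rfl fun j _ => by rw [Finset.mul_sum]
      rw [hswap]
      have hfun : (fun j => ∑ es' : Fin t → G.edgeFinset,
          procL u2 (List.ofFn fun s => ((es' s : Sym2 V))) j) = K ^ t • u2 := by
        funext j; rw [ih j]; rfl
      rw [hfun, Matrix.mulVec_smul, heig]
      simp [mul_assoc]
    rw [hA, hB]
    ring

open Matrix in
/-- if `u₂` is a unit eigenvector of the Laplacian for the second-smallest
eigenvalue `λ₂` (characterized as the least Rayleigh quotient over nonzero mean-zero
vectors), then the averaging process started at `u₂` satisfies
`E‖v(t)‖₂² ≥ (1 - λ₂/(2|E|))^{2t}`.  The expectation is the uniform average over all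
length-`t` edge sequences of `G`. -/
theorem expected_l2_sq_lower_bound (G : SimpleGraph V) [DecidableRel G.Adj]
    (hG : G.Connected) (lam2 : ℝ)
    (hlam2 : IsLeast {r : ℝ | ∃ w : V → ℝ, w ≠ 0 ∧ (∑ i, w i) = 0 ∧
      r = (w ⬝ᵥ (G.lapMatrix ℝ).mulVec w) / (∑ i, (w i) ^ 2)} lam2)
    (u2 : V → ℝ) (heig : (G.lapMatrix ℝ).mulVec u2 = lam2 • u2)
    (hunit : ∑ i, (u2 i) ^ 2 = 1) (t : ℕ) :
    (1 - lam2 / (2 * (G.edgeFinset.card : ℝ))) ^ (2 * t)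
      ≤ (∑ es : Fin t → G.edgeFinset, ∑ i,
            (procL u2 (List.ofFn fun s => ((es s : Sym2 V))) i) ^ 2)
          / ((G.edgeFinset.card : ℝ) ^ t) := by
  -- the graph has at least one edge
  have hmpos : 0 < G.edgeFinset.card := by
    rcases hlam2.1 with ⟨w, hw0, hwsum, -⟩
    rw [Finset.card_pos, SimpleGraph.edgeFinset_nonempty]
    rintro rfl
    have hall : ∀ a b : V, a = b := fun a b =>
      SimpleGraph.reachable_bot.1 (hG.preconnected a b)
    apply hw0
    funext i
    have h1 : (∑ j, w j) = (Fintype.card V : ℝ) * w i := by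
      rw [Finset.sum_congr rfl fun j _ => congrArg w (hall j i), Finset.sum_const,
          nsmul_eq_mul, Finset.card_univ]
    rw [hwsum] at h1
    have hcard : (0:ℝ) < (Fintype.card V : ℝ) := by
      exact_mod_cast Fintype.card_pos_iff.2 ⟨i⟩
    have := (mul_eq_zero.1 h1.symm).resolve_left (ne_of_gt hcard)
    simpa using this
  set m : ℝ := (G.edgeFinset.card : ℝ) with hm
  have hm0 : (0:ℝ) < m := by rw [hm]; exact_mod_cast hmpos
  set K : ℝ := m - lam2 / 2 with hK
  have hW := sum_procL G lam2 u2 heig t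
  have hcardfun : ((Finset.univ : Finset (Fin t → G.edgeFinset)).card : ℝ) = m ^ t := by
    rw [Finset.card_univ, Fintype.card_fun, Fintype.card_coe, Fintype.card_fin]
    push_cast
    rfl
  have hCS : ∀ i : V, (K ^ t * u2 i) ^ 2
      ≤ m ^ t * ∑ es : Fin t → G.edgeFinset,
          (procL u2 (List.ofFn fun s => ((es s : Sym2 V))) i) ^ 2 := by
    intro i
    rw [← hW i, ← hcardfun]
    exact sq_sum_le_card_mul_sum_sq
  set S : ℝ := ∑ es : Fin t → G.edgeFinset, ∑ i,
      (procL u2 (List.ofFn fun s => ((es s : Sym2 V))) i) ^ 2 with hS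
  have hsum : K ^ (2 * t) ≤ m ^ t * S := by
    have h1 : ∑ i, (K ^ t * u2 i) ^ 2 = K ^ (2 * t) := by
      have : ∀ i : V, (K ^ t * u2 i) ^ 2 = K ^ (2 * t) * (u2 i) ^ 2 := by
        intro i
        rw [mul_pow, ← pow_mul, mul_comm t 2]
      rw [Finset.sum_congr rfl fun i _ => this i, ← Finset.mul_sum, hunit, mul_one]
    calc K ^ (2 * t) = ∑ i, (K ^ t * u2 i) ^ 2 := h1.symm
      _ ≤ ∑ i, m ^ t * ∑ es : Fin t → G.edgeFinset,
            (procL u2 (List.ofFn fun s => ((es s : Sym2 V))) i) ^ 2 :=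
        Finset.sum_le_sum fun i _ => hCS i
      _ = m ^ t * S := by rw [← Finset.mul_sum, hS, Finset.sum_comm]
  have hc : 1 - lam2 / (2 * m) = K / m := by
    rw [hK]
    field_simp
  rw [hc, div_pow]
  have hpow : m ^ (2 * t) = m ^ t * m ^ t := by
    rw [two_mul, pow_add]
  rw [div_le_div_iff₀ (by positivity) (by positivity)]
  calc K ^ (2 * t) * m ^ t ≤ (m ^ t * S) * m ^ t :=
      mul_le_mul_of_nonneg_right hsum (by positivity)
    _ = S * m ^ (2 * t) := by rw [hpow]; ring
end
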